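/- The translation tr₁ from L_C to L′_C, defined by the clauses tr₁(Y=y) = []Y=y; tr₁(¬φ) = ¬tr₁(φ); tr₁(φ₁∧φ₂) = tr₁(φ₁)∧tr₁(φ₂); tr₁([X⃗:=x⃗]Y=y) = [X⃗:=x⃗]Y=y; tr₁([X⃗:=x⃗]¬φ) = tr₁(¬[X⃗:=x⃗]φ); tr₁([X⃗:=x⃗](φ₁∧φ₂)) = tr₁([X⃗:=x⃗]φ₁ ∧ [X⃗:=x⃗]φ₂); tr₁([X⃗:=x⃗][Y⃗:=y⃗]φ) = tr₁([X⃗′:=x⃗′, Y⃗:=y⃗]φ) with X⃗′ = X⃗ \ Y⃗, is well defined and satisfies, for every L_C formula φ: (1) tr₁(φ) ∈ L′_C; (2) φ ↔ tr₁(φ) is provable in the system L_C; (3) φ ↔ tr₁(φ) is valid over recursive causal models. -/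

import Mathlib

open Classical

/-- A finite signature: variables sorted into exogenous and endogenous, each with a
finite nonempty range of values. -/
structure Sig : Type 1 where
  Var : Type
  exo : Var → Prop
  Val : Var → Type
  [decEqVar : DecidableEq Var]
  [finVar : Fintype Var]
  [neVar : Nonempty Var]
  [decEqVal : ∀ X : Var, DecidableEq (Val X)]
  [finVal : ∀ X : Var, Fintype (Val X)]
  [neVal : ∀ X : Var, Nonempty (Val X)]

attribute [instance] Sig.decEqVar Sig.finVar Sig.neVar Sig.decEqVal Sig.finVal Sig.neVal

variable {S : Sig}

/-- A valuation: a value for each variable. -/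
abbrev Env (S : Sig) : Type := ∀ X : S.Var, S.Val X

instance : Nonempty (Env S) := ⟨fun X => Classical.arbitrary (S.Val X)⟩

/-- Values for all variables other than `V`. -/
abbrev Others (S : Sig) (V : S.Var) : Type := ∀ X : {X : S.Var // X ≠ V}, S.Val X.val

/-- The restriction of a valuation to the variables other than `V`. -/
def Env.restrict (A : Env S) (V : S.Var) : Others S V := fun X => A X.val

/-- A family of structural functions (only the components at endogenous variables
are meaningful). -/
abbrev StructFuns (S : Sig) : Type := ∀ V : S.Var, Others S V → S.Val V

/-- A valuation complies with the structural functions: the value of each endogenous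
variable is obtained by applying its structural function to the values of all
other variables. -/
def Complies (F : StructFuns S) (A : Env S) : Prop :=
  ∀ V : S.Var, ¬ S.exo V → A V = F V (A.restrict V)

/-- The endogenous variable `V` is directly causally affected by `X` under `F`. -/
def DirAff (F : StructFuns S) (X V : S.Var) : Prop :=
  ¬ S.exo V ∧ ∃ (h : X ≠ V) (g : Others S V) (x₁ x₂ : S.Val X),
    x₁ ≠ x₂ ∧
      F V (Function.update g ⟨X, h⟩ x₁) ≠ F V (Function.update g ⟨X, h⟩ x₂)

/-- `F` is recursive: the transitive closure of the direct causal dependence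
relation is asymmetric (transitivity is automatic for `Relation.TransGen`). -/
def RecursiveF (F : StructFuns S) : Prop :=
  ∀ a b : S.Var, Relation.TransGen (DirAff F) a b → ¬ Relation.TransGen (DirAff F) b a

/-- An assignment of values to a set of pairwise distinct variables. -/
abbrev Intervention (S : Sig) : Type := ∀ X : S.Var, Option (S.Val X)

/-- The empty assignment. -/
def iEmpty (S : Sig) : Intervention S := fun _ => none

/-- Extend an assignment by additionally setting `Y` to `y` (overriding). -/
def iUpd (I : Intervention S) (Y : S.Var) (y : S.Val Y) : Intervention S :=
  Function.update I Y (some y)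

/-- Combine assignments, the second overriding the first:  `[X⃗ := x⃗, Y⃗ := y⃗]`. -/
def icomp (I J : Intervention S) : Intervention S := fun W =>
  match J W with
  | some v => some v
  | none => I W

/-- The intervened family of structural functions: intervened variables get the
constant function returning the assigned value; the rest are unchanged. -/
def intF (F : StructFuns S) (I : Intervention S) : StructFuns S :=
  fun V g => (I V).getD (F V g)

/-- `A'` is the result of intervening with `I` on the valuation `A` (w.r.t. `F`):
exogenous intervened variables get the assigned value, exogenous non-intervened
variables keep their value, and each endogenous variable complies with its new
structural function. -/
def IntervenedVal (F : StructFuns S) (A : Env S) (I : Intervention S) (A' : Env S) : Prop :=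
  (∀ X : S.Var, S.exo X → ∀ v : S.Val X, I X = some v → A' X = v) ∧
  (∀ X : S.Var, S.exo X → I X = none → A' X = A X) ∧
  (∀ V : S.Var, ¬ S.exo V → A' V = intF F I V (A'.restrict V))

/-- The intervened valuation (unique when `F` is recursive). -/
noncomputable def intVal (F : StructFuns S) (A : Env S) (I : Intervention S) : Env S :=
  Classical.epsilon (IntervenedVal F A I)

/-- The language L_C: atoms `Y = y`, negation, conjunction, interventionist
counterfactual operators. -/
inductive Form (S : Sig) : Type where
  | eq (Y : S.Var) (y : S.Val Y) : Form S
  | neg (φ : Form S) : Form S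
  | conj (φ ψ : Form S) : Form S
  | int (I : Intervention S) (φ : Form S) : Form S

namespace Form

/-- Material implication, defined from `¬` and `∧` as usual. -/
def impl (φ ψ : Form S) : Form S := Form.neg (Form.conj φ (Form.neg ψ))

/-- Disjunction, defined from `¬` and `∧` as usual. -/
def orF (φ ψ : Form S) : Form S := Form.neg (Form.conj (Form.neg φ) (Form.neg ψ))

/-- Biconditional. -/
def iffF (φ ψ : Form S) : Form S := Form.conj (impl φ ψ) (impl ψ φ)

end Form

/-- A canonical contradiction. -/
noncomputable def botF (S : Sig) : Form S :=
  let X : S.Var := Classical.arbitrary S.Var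
  let x : S.Val X := Classical.arbitrary (S.Val X)
  Form.conj (Form.eq X x) (Form.neg (Form.eq X x))

/-- A canonical tautology. -/
noncomputable def topF (S : Sig) : Form S := Form.neg (botF S)

/-- Disjunction of a list of formulas (the empty disjunction is a contradiction). -/
noncomputable def bigOr : List (Form S) → Form S
  | [] => botF S
  | φ :: l => l.foldl Form.orF φ

/-- Conjunction of a list of formulas (the empty conjunction is a tautology). -/
noncomputable def bigConj : List (Form S) → Form S
  | [] => topF S
  | φ :: l => l.foldl Form.conj φ

/-- `φ` is an instance of a propositional tautology: it evaluates to `true` under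
every Boolean valuation that respects negation and conjunction (treating all
other formulas as atoms). -/
def Tauto (φ : Form S) : Prop :=
  ∀ v : Form S → Bool,
    (∀ ψ : Form S, v (Form.neg ψ) = !(v ψ)) →
    (∀ ψ χ : Form S, v (Form.conj ψ χ) = (v ψ && v χ)) →
    v φ = true

/-- The assignment `[Z⃗ := z⃗, X := x]` where `Z⃗` lists all variables other than
`X` and `V`, used in the formula `X ⇝ V`. -/
def ltInt (X V : S.Var) (g : ∀ W : {W : S.Var // W ≠ X ∧ W ≠ V}, S.Val W.val)
    (x : S.Val X) : Intervention S := fun W =>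
  if h : W = X then some (h.symm ▸ x)
  else if h' : W = V then none
  else some (g ⟨W, ⟨h, h'⟩⟩)

/-- The formula `X ⇝ V`: the disjunction, over tuples `z⃗` of values for all
variables other than `X` and `V`, distinct values `x₁ ≠ x₂` of `X` and distinct
values `v₁ ≠ v₂` of `V`, of `[Z⃗:=z⃗, X:=x₁]V=v₁ ∧ [Z⃗:=z⃗, X:=x₂]V=v₂`. -/
noncomputable def leadsTo (X V : S.Var) : Form S :=
  bigOr ((Finset.univ.filter
      (fun p : (∀ W : {W : S.Var // W ≠ X ∧ W ≠ V}, S.Val W.val) ×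
          (S.Val X × S.Val X) × (S.Val V × S.Val V) =>
        p.2.1.1 ≠ p.2.1.2 ∧ p.2.2.1 ≠ p.2.2.2)).toList.map
    (fun p =>
      Form.conj
        (Form.int (ltInt X V p.1 p.2.1.1) (Form.eq V p.2.2.1))
        (Form.int (ltInt X V p.1 p.2.1.2) (Form.eq V p.2.2.2))))

/-- The chain `X₀ ⇝ X₁ ∧ ⋯ ∧ X_k ⇝ X_{k+1}`. -/
noncomputable def chainConj (X : ℕ → S.Var) : ℕ → Form S
  | 0 => leadsTo (X 0) (X 1)
  | n + 1 => Form.conj (chainConj X n) (leadsTo (X (n + 1)) (X (n + 2)))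

/-- `ψ₁ → (ψ₂ → ⋯ → (ψₙ → φ))` for a list of premises. -/
def impsFrom : List (Form S) → Form S → Form S
  | [], φ => φ
  | ψ :: l, φ => Form.impl ψ (impsFrom l φ)

/-- Satisfaction of an L_C formula in a causal model `⟨F, A⟩`. -/
def SatC : Form S → StructFuns S → Env S → Prop
  | Form.eq Y y, _, A => A Y = y
  | Form.neg φ, F, A => ¬ SatC φ F A
  | Form.conj φ ψ, F, A => SatC φ F A ∧ SatC ψ F A
  | Form.int I φ, F, A => SatC φ (intF F I) (intVal F A I)

/-- The proof system L_C. -/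
inductive ThmC : Form S → Prop where
  | taut : ∀ {φ : Form S}, Tauto φ → ThmC φ
  | mp : ∀ {φ ψ : Form S}, ThmC (Form.impl φ ψ) → ThmC φ → ThmC ψ
  | a1 : ∀ (I : Intervention S) (Y : S.Var) (y y' : S.Val Y), y ≠ y' →
      ThmC (Form.impl (Form.int I (Form.eq Y y)) (Form.neg (Form.int I (Form.eq Y y'))))
  | a2 : ∀ (I : Intervention S) (Y : S.Var),
      ThmC (bigOr (((Finset.univ : Finset (S.Val Y)).toList).map
        (fun y => Form.int I (Form.eq Y y))))
  | a3 : ∀ (I : Intervention S) (Y Z : S.Var) (y : S.Val Y) (z : S.Val Z),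
      ThmC (Form.impl (Form.conj (Form.int I (Form.eq Y y)) (Form.int I (Form.eq Z z)))
        (Form.int (iUpd I Y y) (Form.eq Z z)))
  | a4 : ∀ (I : Intervention S) (Y : S.Var) (y : S.Val Y),
      ThmC (Form.int (iUpd I Y y) (Form.eq Y y))
  | a5 : ∀ (I : Intervention S) (Y Z : S.Var) (y : S.Val Y) (z : S.Val Z), Y ≠ Z →
      ThmC (Form.impl
        (Form.conj (Form.int (iUpd I Y y) (Form.eq Z z)) (Form.int (iUpd I Z z) (Form.eq Y y)))
        (Form.int I (Form.eq Z z)))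
  | a6 : ∀ (X : ℕ → S.Var) (k : ℕ),
      (∀ i : ℕ, i ≤ k → X i ≠ X (i + 1)) → X (k + 1) ≠ X 0 →
      ThmC (Form.impl (chainConj X k) (Form.neg (leadsTo (X (k + 1)) (X 0))))
  | a7 : ∀ (I : Intervention S) (U : S.Var) (u : S.Val U), S.exo U → I U = none →
      ThmC (Form.iffF (Form.int (iEmpty S) (Form.eq U u)) (Form.int I (Form.eq U u)))
  | aEmpty : ∀ (Y : S.Var) (y : S.Val Y),
      ThmC (Form.iffF (Form.eq Y y) (Form.int (iEmpty S) (Form.eq Y y)))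
  | aNeg : ∀ (I : Intervention S) (φ : Form S),
      ThmC (Form.iffF (Form.int I (Form.neg φ)) (Form.neg (Form.int I φ)))
  | aConj : ∀ (I : Intervention S) (φ ψ : Form S),
      ThmC (Form.iffF (Form.int I (Form.conj φ ψ))
        (Form.conj (Form.int I φ) (Form.int I ψ)))
  | aIntInt : ∀ (I J : Intervention S) (φ : Form S),
      ThmC (Form.iffF (Form.int I (Form.int J φ)) (Form.int (icomp I J) φ))

/-- Strong derivability from a set of premises in L_C. -/
def ProvC (Γ : Set (Form S)) (φ : Form S) : Prop :=
  ∃ l : List (Form S), (∀ ψ ∈ l, ψ ∈ Γ) ∧ ThmC (impsFrom l φ)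

/-- The language L′_C: Boolean combinations of formulas `[X⃗:=x⃗]Y=y`. -/
inductive IsC' : Form S → Prop where
  | intEq : ∀ (I : Intervention S) (Y : S.Var) (y : S.Val Y),
      IsC' (Form.int I (Form.eq Y y))
  | neg : ∀ {φ : Form S}, IsC' φ → IsC' (Form.neg φ)
  | conj : ∀ {φ ψ : Form S}, IsC' φ → IsC' ψ → IsC' (Form.conj φ ψ)

/-- The translation tr₁ from L_C to L′_C, given as a relation defined by the
recursive clauses of the definition (the theorem below asserts that it is well
defined, i.e. total and functional). -/
inductive Tr1 : Form S → Form S → Prop where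
  | eq : ∀ (Y : S.Var) (y : S.Val Y),
      Tr1 (Form.eq Y y) (Form.int (iEmpty S) (Form.eq Y y))
  | neg : ∀ {φ φ' : Form S}, Tr1 φ φ' → Tr1 (Form.neg φ) (Form.neg φ')
  | conj : ∀ {φ φ' ψ ψ' : Form S}, Tr1 φ φ' → Tr1 ψ ψ' →
      Tr1 (Form.conj φ ψ) (Form.conj φ' ψ')
  | intEq : ∀ (I : Intervention S) (Y : S.Var) (y : S.Val Y),
      Tr1 (Form.int I (Form.eq Y y)) (Form.int I (Form.eq Y y))
  | intNeg : ∀ {I : Intervention S} {φ χ : Form S},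
      Tr1 (Form.neg (Form.int I φ)) χ → Tr1 (Form.int I (Form.neg φ)) χ
  | intConj : ∀ {I : Intervention S} {φ ψ χ : Form S},
      Tr1 (Form.conj (Form.int I φ) (Form.int I ψ)) χ →
      Tr1 (Form.int I (Form.conj φ ψ)) χ
  | intInt : ∀ {I J : Intervention S} {φ χ : Form S},
      Tr1 (Form.int (icomp I J) φ) χ → Tr1 (Form.int I (Form.int J φ)) χ

/-! tr₁ is a recursion on a weight that doubles under an intervention operator, so every clause
strictly decreases it, and it is functional because exactly one clause applies to each formula.
Each clause is an instance of A[], A¬, A∧ or A[][] (or a propositional congruence), which gives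
provability. Validity reduces to the soundness of A[] and A[][]: the intervened valuation of a
recursive model is unique, by well-founded induction along direct causal dependence (intervening
only removes dependences), so it is the model's own valuation for `[]` and composes as `icomp`. -/

namespace Form

def weight : Form S → ℕ
  | .eq _ _ => 1
  | .neg φ => φ.weight + 1
  | .conj φ ψ => φ.weight + ψ.weight + 1
  | .int _ φ => 2 * φ.weight

lemma weight_pos : ∀ φ : Form S, 0 < φ.weight
  | .eq _ _ | .neg _ | .conj _ _ => Nat.succ_pos _
  | .int _ φ => Nat.mul_pos two_pos φ.weight_pos

end Form

namespace Tr1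

theorem total : ∀ φ : Form S, ∃ φ', Tr1 φ φ'
  | .eq Y y => ⟨_, .eq Y y⟩
  | .neg φ => let ⟨_, h⟩ := total φ; ⟨_, .neg h⟩
  | .conj φ ψ => let ⟨_, h₁⟩ := total φ; let ⟨_, h₂⟩ := total ψ; ⟨_, .conj h₁ h₂⟩
  | .int I (.eq Y y) => ⟨_, .intEq I Y y⟩
  | .int I (.neg φ) => let ⟨_, h⟩ := total (.neg (.int I φ)); ⟨_, .intNeg h⟩
  | .int I (.conj φ ψ) =>
    let ⟨_, h⟩ := total (.conj (.int I φ) (.int I ψ)); ⟨_, .intConj h⟩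
  | .int I (.int J φ) => let ⟨_, h⟩ := total (.int (icomp I J) φ); ⟨_, .intInt h⟩
termination_by φ => φ.weight
decreasing_by all_goals simp only [Form.weight]; have := Form.weight_pos φ; omega

theorem unique {φ a b : Form S} (ha : Tr1 φ a) (hb : Tr1 φ b) : a = b := by
  induction ha generalizing b with
  | eq | intEq => cases hb; rfl
  | neg _ ih => cases hb with | neg h => rw [ih h]
  | conj _ _ ih₁ ih₂ => cases hb with | conj h₁ h₂ => rw [ih₁ h₁, ih₂ h₂]
  | intNeg _ ih => cases hb with | intNeg h => exact ih h
  | intConj _ ih => cases hb with | intConj h => exact ih h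
  | intInt _ ih => cases hb with | intInt h => exact ih h

theorem isC' {φ φ' : Form S} (h : Tr1 φ φ') : IsC' φ' := by
  induction h with
  | eq Y y => exact .intEq _ Y y
  | intEq I Y y => exact .intEq I Y y
  | neg _ ih => exact .neg ih
  | conj _ _ ih₁ ih₂ => exact .conj ih₁ ih₂
  | intNeg _ ih | intConj _ ih | intInt _ ih => exact ih

end Tr1

namespace ThmC

open Form

lemma iffF_refl (φ : Form S) : ThmC (iffF φ φ) :=
  taut fun v hn hc => by
    simp only [iffF, impl, hn, hc]
    cases v φ <;> rfl

lemma iffF_trans {φ ψ χ : Form S} (h₁ : ThmC (iffF φ ψ)) (h₂ : ThmC (iffF ψ χ)) :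
    ThmC (iffF φ χ) := by
  refine mp (mp (taut fun v hn hc => ?_) h₁) h₂
  simp only [iffF, impl, hn, hc]
  cases v φ <;> cases v ψ <;> cases v χ <;> rfl

lemma iffF_neg {φ ψ : Form S} (h : ThmC (iffF φ ψ)) : ThmC (iffF (neg φ) (neg ψ)) := by
  refine mp (taut fun v hn hc => ?_) h
  simp only [iffF, impl, hn, hc]
  cases v φ <;> cases v ψ <;> rfl

lemma iffF_conj {φ φ' ψ ψ' : Form S} (hφ : ThmC (iffF φ φ')) (hψ : ThmC (iffF ψ ψ')) :
    ThmC (iffF (conj φ ψ) (conj φ' ψ')) := by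
  refine mp (mp (taut fun v hn hc => ?_) hφ) hψ
  simp only [iffF, impl, hn, hc]
  cases v φ <;> cases v φ' <;> cases v ψ <;> cases v ψ' <;> rfl

end ThmC

theorem Tr1.thmC_iffF {φ φ' : Form S} (h : Tr1 φ φ') : ThmC (Form.iffF φ φ') := by
  induction h with
  | eq Y y => exact .aEmpty Y y
  | intEq => exact ThmC.iffF_refl _
  | neg _ ih => exact ThmC.iffF_neg ih
  | conj _ _ ih₁ ih₂ => exact ThmC.iffF_conj ih₁ ih₂
  | @intNeg I φ _ _ ih => exact (ThmC.aNeg I φ).iffF_trans ih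
  | @intConj I φ ψ _ _ ih => exact (ThmC.aConj I φ ψ).iffF_trans ih
  | @intInt I J φ _ _ ih => exact (ThmC.aIntInt I J φ).iffF_trans ih

lemma eq_of_forall_ne_imp_insensitive {ι : Type*} [Fintype ι] [DecidableEq ι] {β : ι → Type*}
    {γ : Type*} (f : (∀ i, β i) → γ) {g g' : ∀ i, β i}
    (h : ∀ i, g i ≠ g' i → ∀ z x y, f (Function.update z i x) = f (Function.update z i y)) :
    f g = f g' := by
  suffices H : ∀ s : Finset ι, ∀ g, (∀ i ∉ s, g i = g' i) →
      (∀ i ∈ s, ∀ z x y, f (Function.update z i x) = f (Function.update z i y)) → f g = f g' from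
    H (Finset.univ.filter fun i => g i ≠ g' i) g (by simp) (by simpa using h)
  intro s
  induction s using Finset.induction_on with
  | empty => exact fun g hg _ => congrArg f (funext fun i => hg i (Finset.notMem_empty i))
  | insert a s _ ih =>
    intro g hg hs
    calc f g = f (Function.update g a (g a)) := by rw [Function.update_eq_self]
      _ = f (Function.update g a (g' a)) := hs a (Finset.mem_insert_self a s) _ _ _
      _ = f g' := ih _ (fun i hi => ?_) fun i hi => hs i (Finset.mem_insert_of_mem hi)
    rcases eq_or_ne i a with rfl | hia
    · exact Function.update_self ..
    · rw [Function.update_of_ne hia]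
      exact hg i (by simp [hia, hi])

section Semantics

variable {F : StructFuns S} {A : Env S} {I J : Intervention S}

lemma structFun_congr {G : StructFuns S} {V : S.Var} (hV : ¬ S.exo V) {g g' : Others S V}
    (h : ∀ X : {X // X ≠ V}, DirAff G X V → g X = g' X) : G V g = G V g' :=
  eq_of_forall_ne_imp_insensitive (G V) fun X hX z x y => by
    by_contra hne
    exact hX (h X ⟨hV, X.2, z, x, y, fun hxy => hne (by rw [hxy]), hne⟩)

lemma DirAff.of_intF {X V : S.Var} (h : DirAff (intF F I) X V) : DirAff F X V := by
  obtain ⟨hV, hXV, g, x₁, x₂, hx, hne⟩ := h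
  rcases hI : I V with _ | v
  · exact ⟨hV, hXV, g, x₁, x₂, hx, by simpa only [intF, hI, Option.getD_none] using hne⟩
  · simp [intF, hI] at hne

lemma RecursiveF.intF (hF : RecursiveF F) (I : Intervention S) : RecursiveF (intF F I) :=
  fun a b hab hba =>
    hF a b (Relation.TransGen.mono (fun _ _ => DirAff.of_intF) _ _ hab)
      (Relation.TransGen.mono (fun _ _ => DirAff.of_intF) _ _ hba)

lemma RecursiveF.wellFounded (hF : RecursiveF F) : WellFounded (DirAff F) :=
  have : Std.Irrefl (Relation.TransGen (DirAff F)) := ⟨fun a h => hF a a h h⟩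
  Subrelation.wf Relation.TransGen.single (Finite.wellFounded_of_trans_of_irrefl _)

lemma intervenedVal_iff {A' : Env S} :
    IntervenedVal F A I A' ↔ (∀ X, S.exo X → A' X = (I X).getD (A X)) ∧ Complies (intF F I) A' := by
  refine ⟨fun ⟨hsome, hnone, hc⟩ => ⟨fun X hX => ?_, hc⟩, fun ⟨hexo, hc⟩ =>
    ⟨fun X hX v hv => by simpa [hv] using hexo X hX, fun X hX hv => by simpa [hv] using hexo X hX,
      hc⟩⟩
  rcases hI : I X with _ | v
  · exact hnone X hX hI
  · exact hsome X hX v hI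

lemma exists_intervenedVal (hF : RecursiveF F) (A : Env S) (I : Intervention S) :
    ∃ A', IntervenedVal F A I A' := by
  set G := intF F I
  have hwf := (hF.intF I).wellFounded
  let A' : Env S := hwf.fix fun V rec =>
    if S.exo V then (I V).getD (A V)
    else G V fun X => if h : DirAff G X V then rec X h else A X
  have hA' : ∀ V, A' V = _ := hwf.fix_eq _
  refine ⟨A', intervenedVal_iff.2 ⟨fun X hX => by rw [hA', if_pos hX], fun V hV => ?_⟩⟩
  rw [hA', if_neg hV]
  exact structFun_congr hV fun X hX => dif_pos hX

lemma IntervenedVal.unique (hF : RecursiveF F) {A₁ A₂ : Env S} (h₁ : IntervenedVal F A I A₁)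
    (h₂ : IntervenedVal F A I A₂) : A₁ = A₂ := by
  rw [intervenedVal_iff] at h₁ h₂
  funext V
  induction V using (hF.intF I).wellFounded.induction with
  | _ V ih =>
    by_cases hV : S.exo V
    · rw [h₁.1 V hV, h₂.1 V hV]
    · rw [h₁.2 V hV, h₂.2 V hV]
      exact structFun_congr hV fun X hX => ih X hX

lemma intervenedVal_intVal (hF : RecursiveF F) (A : Env S) (I : Intervention S) :
    IntervenedVal F A I (intVal F A I) :=
  Classical.epsilon_spec (exists_intervenedVal hF A I)

lemma intVal_iEmpty (hF : RecursiveF F) (hA : Complies F A) : intVal F A (iEmpty S) = A :=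
  (intervenedVal_intVal hF A _).unique hF (intervenedVal_iff.2 ⟨fun _ _ => rfl, hA⟩)

lemma icomp_getD (I J : Intervention S) (X : S.Var) (a : S.Val X) :
    (icomp I J X).getD a = (J X).getD ((I X).getD a) := by
  simp only [icomp]
  cases J X <;> rfl

lemma intF_icomp (F : StructFuns S) (I J : Intervention S) :
    intF (intF F I) J = intF F (icomp I J) := by
  funext V g
  exact (icomp_getD I J V _).symm

lemma intVal_icomp (hF : RecursiveF F) (A : Env S) (I J : Intervention S) :
    intVal (intF F I) (intVal F A I) J = intVal F A (icomp I J) := by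
  have hB := (intervenedVal_iff.1 (intervenedVal_intVal hF A I)).1
  refine congrArg Classical.epsilon (funext fun A' => propext ?_)
  rw [intervenedVal_iff, intervenedVal_iff, intF_icomp]
  refine and_congr_left' (forall₂_congr fun X hX => ?_)
  rw [icomp_getD, hB X hX]

lemma satC_int_int (hF : RecursiveF F) (φ : Form S) :
    SatC (.int I (.int J φ)) F A ↔ SatC (.int (icomp I J) φ) F A := by
  simp only [SatC, intF_icomp, intVal_icomp hF]

theorem Tr1.satC_iff {φ φ' : Form S} (h : Tr1 φ φ') (hF : RecursiveF F) (hA : Complies F A) :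
    SatC φ F A ↔ SatC φ' F A := by
  induction h with
  | eq Y y => simp only [SatC, intVal_iEmpty hF hA]
  | intEq => rfl
  | neg _ ih => exact not_congr ih
  | conj _ _ ih₁ ih₂ => exact and_congr ih₁ ih₂
  | intNeg _ ih | intConj _ ih => exact ih
  | intInt _ ih => exact (satC_int_int hF _).trans ih

end Semantics

/-- Theorem: the translation tr₁ is well defined (it assigns to each L_C formula a
unique translation) and, for every L_C formula `φ`: (1) `tr₁(φ)` is an L′_C
formula; (2) `φ ↔ tr₁(φ)` is provable in the system L_C; (3) `φ ↔ tr₁(φ)` is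
valid over recursive causal models. -/
theorem tr1_well_defined_and_correct (S : Sig) (φ : Form S) :
    (∃! φ' : Form S, Tr1 φ φ') ∧
      ∀ φ' : Form S, Tr1 φ φ' →
        IsC' φ' ∧
        ThmC (Form.iffF φ φ') ∧
        ∀ (F : StructFuns S) (A : Env S), RecursiveF F → Complies F A →
          (SatC φ F A ↔ SatC φ' F A) := by
  obtain ⟨φ', h⟩ := Tr1.total φ
  exact ⟨⟨φ', h, fun _ h' => h'.unique h⟩,
    fun _ h' => ⟨h'.isC', h'.thmC_iffF, fun _ _ hF hA => h'.satC_iff hF hA⟩⟩
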